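/- arXiv:1508.05741 — 6 statements merged into one kernel-verified Lean document; each statement's English description precedes it below -/
import Mathlib

section
/- Suppose K : ℝ → ℝ is continuous with K ≤ 0 pointwise and the operator id + K_J on L²(J) (J a bounded interval) is invertible via a uniformly convergent Neumann series for the resolvent. Then the resolvent kernel satisfies R_J(λ,μ) ≤ K(λ−μ) ≤ 0 for all λ, μ. -/
open Real MeasureTheory

/-- The iterated kernels of the Neumann series for the resolvent of `id + K_J`. -/
noncomputable def iterK (K : ℝ → ℝ) (J : Set ℝ) : ℕ → ℝ → ℝ → ℝ
  | 0 => fun x y => K (x - y)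
  | n + 1 => fun x y => ∫ ν in J, K (x - ν) * iterK K J n ν y

/-! For `K ≤ 0` every term `(-1)^n (K_J^n K)` of the Neumann series is `≤ 0`, since the sign
`(-1)^(n+1)` splits as one factor `-K ≥ 0` per kernel; so the sum is at most its first term `K`. -/

theorem hasSum_le_of_nonpos {ι α : Type*} [AddCommGroup α] [PartialOrder α]
    [IsOrderedAddMonoid α] [TopologicalSpace α] [IsTopologicalAddGroup α] [OrderClosedTopology α]
    {f : ι → α} {a : α} (hf : HasSum f a) (i : ι) (hf_nonpos : ∀ j, j ≠ i → f j ≤ 0) :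
    a ≤ f i :=
  neg_le_neg_iff.mp <| le_hasSum hf.neg i fun j hj => neg_nonneg.mpr (hf_nonpos j hj)

theorem neg_one_pow_succ_mul_iterK_succ (K : ℝ → ℝ) (J : Set ℝ) (n : ℕ) (x y : ℝ) :
    (-1 : ℝ) ^ (n + 1) * iterK K J (n + 1) x y
      = ∫ ν in J, -K (x - ν) * ((-1 : ℝ) ^ n * iterK K J n ν y) := by
  rw [iterK, ← integral_const_mul]
  congr 1 with ν
  ring

theorem neg_one_pow_mul_iterK_nonpos {K : ℝ → ℝ} (hK_nonpos : ∀ x, K x ≤ 0) (J : Set ℝ)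
    (n : ℕ) (x y : ℝ) : (-1 : ℝ) ^ n * iterK K J n x y ≤ 0 := by
  induction n generalizing x with
  | zero => simpa [iterK] using hK_nonpos (x - y)
  | succ n ih =>
    rw [neg_one_pow_succ_mul_iterK_succ]
    exact integral_nonpos fun ν =>
      mul_nonpos_of_nonneg_of_nonpos (neg_nonneg.mpr (hK_nonpos (x - ν))) (ih ν)

theorem resolvent_kernel_nonpos_general (K : ℝ → ℝ) (hKneg : ∀ x, K x ≤ 0)
    (J : Set ℝ)
    (R : ℝ → ℝ → ℝ)
    (hR : ∀ x y : ℝ, HasSum (fun n => (-1 : ℝ) ^ n * iterK K J n x y) (R x y)) :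
    ∀ x y : ℝ, R x y ≤ K (x - y) ∧ K (x - y) ≤ 0 := by
  intro x y
  have h_first : R x y ≤ (-1 : ℝ) ^ 0 * iterK K J 0 x y :=
    hasSum_le_of_nonpos (hR x y) 0 fun n _ => neg_one_pow_mul_iterK_nonpos hKneg J n x y
  exact ⟨by simpa [iterK] using h_first, hKneg (x - y)⟩

/-- If `K ≤ 0` is continuous and the Neumann series for the resolvent kernel of
`id + K_J` (on a bounded interval `J`) converges, then the resolvent kernel satisfies
`R_J(λ, μ) ≤ K(λ - μ) ≤ 0`. This is the regime `-1 < Δ < 0` of the XXZ chain. -/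
theorem resolvent_kernel_nonpos (K : ℝ → ℝ) (hK : Continuous K) (hKneg : ∀ x, K x ≤ 0)
    (a b : ℝ) (J : Set ℝ) (hJ : J = Set.Icc a b)
    (R : ℝ → ℝ → ℝ)
    (hR : ∀ x y : ℝ, HasSum (fun n => (-1 : ℝ) ^ n * iterK K J n x y) (R x y)) :
    ∀ x y : ℝ, R x y ≤ K (x - y) ∧ K (x - y) ≤ 0 :=
  resolvent_kernel_nonpos_general K hKneg J R hR
end

section
/- Let ζ ∈ [π/2, π) and consider the Yang–Yang action S(μ₁,…,μ_N) = Σ_a P(μ_a)/(2π) − (1/(4πL)) Σ_{a,b} Θ(μ_a−μ_b) − Σ_a μ_a n_a/L where P' = p, Θ' = θ with p, θ the bare momentum and phase for Δ = cos ζ. Then the Hessian of S is positive definite at every point of ℝ^N; in particular S is strictly convex and admits at most one critical point. -/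
open Real

/-!
The Hessian of the Yang–Yang action is `diag (p'(μ_k) / 2π) - (1/L) Δ`, where `Δ` is the weighted
graph Laplacian `(Δ h)_j = ∑_k K(μ_j - μ_k) (h_j - h_k)`; since `K` is even, `⟪h, Δ h⟫` equals
`½ ∑_{j,k} K(μ_j - μ_k) (h_j - h_k)²`. For `ζ ∈ [π/2, π)` we have `p' > 0` and `K ≤ 0`
(`sin 2ζ = 2 sin ζ cos ζ ≤ 0`), so the Hessian is positive definite. If the gradient of the action
vanished at two points `μ ≠ ν`, then `t ↦ ⟪ν - μ, ∇S(μ + t (ν - μ))⟫` would be strictly increasing,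
yet zero at `t = 0` and `t = 1`.
-/

section Laplacian

variable {ι : Type*} [Fintype ι]

def weightedLaplacian (G : ι → ι → ℝ) (v : ι → ℝ) (i : ι) : ℝ :=
  ∑ j, G i j * (v i - v j)

theorem two_mul_sum_mul_weightedLaplacian {G : ι → ι → ℝ} (hG : ∀ i j, G i j = G j i)
    (v : ι → ℝ) :
    2 * ∑ i, v i * weightedLaplacian G v i = ∑ i, ∑ j, G i j * (v i - v j) ^ 2 := by
  have hswap : ∑ i, v i * weightedLaplacian G v i = ∑ i, ∑ j, G i j * (v j - v i) * v j := by
    simp only [weightedLaplacian, Finset.mul_sum]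
    rw [Finset.sum_comm]
    exact Finset.sum_congr rfl fun i _ => Finset.sum_congr rfl fun j _ => by rw [hG]; ring
  calc 2 * ∑ i, v i * weightedLaplacian G v i
      = ∑ i, v i * weightedLaplacian G v i + ∑ i, ∑ j, G i j * (v j - v i) * v j := by
        rw [← hswap]; ring
    _ = ∑ i, ∑ j, G i j * (v i - v j) ^ 2 := by
        simp only [weightedLaplacian, Finset.mul_sum, ← Finset.sum_add_distrib]
        exact Finset.sum_congr rfl fun i _ => Finset.sum_congr rfl fun j _ => by ring

theorem sum_mul_weightedLaplacian_nonpos {G : ι → ι → ℝ} (hG : ∀ i j, G i j = G j i)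
    (hG_nonpos : ∀ i j, G i j ≤ 0) (v : ι → ℝ) :
    ∑ i, v i * weightedLaplacian G v i ≤ 0 := by
  have := two_mul_sum_mul_weightedLaplacian hG v
  have : ∑ i, ∑ j, G i j * (v i - v j) ^ 2 ≤ 0 :=
    Finset.sum_nonpos fun i _ => Finset.sum_nonpos fun j _ =>
      mul_nonpos_of_nonpos_of_nonneg (hG_nonpos i j) (sq_nonneg _)
  linarith

theorem sum_mul_sub_weightedLaplacian_pos {A : ι → ℝ} {c : ℝ} {G : ι → ι → ℝ}
    (hA : ∀ i, 0 < A i) (hc : 0 ≤ c) (hG : ∀ i j, G i j = G j i)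
    (hG_nonpos : ∀ i j, G i j ≤ 0) {v : ι → ℝ} (hv : v ≠ 0) :
    0 < ∑ i, v i * (A i * v i - c * weightedLaplacian G v i) := by
  obtain ⟨i₀, hi₀⟩ : ∃ i, v i ≠ 0 := Function.ne_iff.mp hv
  have hdiag : 0 < ∑ i, A i * v i ^ 2 :=
    Finset.sum_pos' (fun i _ => by have := hA i; positivity)
      ⟨i₀, Finset.mem_univ _, mul_pos (hA i₀) (by positivity)⟩
  have hlap := mul_nonneg hc (neg_nonneg.mpr (sum_mul_weightedLaplacian_nonpos hG hG_nonpos v))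
  calc 0 < ∑ i, A i * v i ^ 2 - c * ∑ i, v i * weightedLaplacian G v i := by linarith
    _ = ∑ i, v i * (A i * v i - c * weightedLaplacian G v i) := by
      rw [Finset.mul_sum, ← Finset.sum_sub_distrib]
      exact Finset.sum_congr rfl fun i _ => by ring

theorem sum_sum_mul_ite_add_eq_sum_mul_weightedLaplacian [DecidableEq ι] (A : ι → ℝ) (c : ℝ)
    (G : ι → ι → ℝ) (v : ι → ℝ) :
    ∑ j, ∑ k, v j * v k * ((if j = k then A k - c * ∑ b, G k b else 0) + c * G j k)
      = ∑ j, v j * (A j * v j - c * weightedLaplacian G v j) := by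
  simp only [mul_add, Finset.sum_add_distrib, mul_ite, mul_zero, Finset.sum_ite_eq,
    Finset.mem_univ, if_true]
  rw [← Finset.sum_add_distrib]
  refine Finset.sum_congr rfl fun j _ => ?_
  have hoff : ∑ k, v j * v k * (c * G j k) = v j * c * ∑ k, G j k * v k := by
    rw [Finset.mul_sum]; exact Finset.sum_congr rfl fun k _ => by ring
  simp only [hoff, weightedLaplacian, mul_sub, Finset.sum_sub_distrib, ← Finset.sum_mul]
  ring

end Laplacian

theorem injective_of_hasDerivAt_line_of_sum_mul_pos {ι : Type*} [Fintype ι]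
    {F : (ι → ℝ) → ι → ℝ} {F' : (ι → ℝ) → (ι → ℝ) → ι → ℝ}
    (hF : ∀ x v, HasDerivAt (fun t : ℝ => F (x + t • v)) (F' x v) 0)
    (hF' : ∀ x v, v ≠ 0 → 0 < ∑ i, v i * F' x v i) : Function.Injective F := by
  intro μ ν hμν
  by_contra hne
  set v := ν - μ
  have hv : v ≠ 0 := sub_ne_zero.mpr (Ne.symm hne)
  let φ : ℝ → ℝ := fun t => ∑ i, v i * F (μ + t • v) i
  have hφ : ∀ t, HasDerivAt φ (∑ i, v i * F' (μ + t • v) v i) t := by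
    intro t
    have hline : HasDerivAt (fun s : ℝ => F (μ + s • v)) (F' (μ + t • v) v) t := by
      have := HasDerivAt.comp_sub_const (x := t) t (by rw [sub_self]; exact hF (μ + t • v) v)
      have hshift : (fun s : ℝ => F (μ + t • v + (s - t) • v)) = fun s => F (μ + s • v) := by
        funext s; rw [add_assoc, ← add_smul, add_sub_cancel]
      rwa [hshift] at this
    exact HasDerivAt.fun_sum fun i _ => ((hasDerivAt_pi.mp hline) i).const_mul (v i)
  have hmono : StrictMono φ :=
    strictMono_of_deriv_pos fun t => (hφ t).deriv ▸ hF' _ _ hv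
  have := hmono zero_lt_one
  simp only [φ, v, zero_smul, add_zero, one_smul, add_sub_cancel, hμν, lt_self_iff_false] at this

section Bethe

variable {ι : Type*} [Fintype ι]

/-- With `P = p / 2π`, `Θ = θ`, `c = 1 / (2πL)` and `n / L` in place of `n`, this is the gradient of
the Yang–Yang action. -/
def betheMap (P Θ : ℝ → ℝ) (c : ℝ) (n μ : ι → ℝ) (a : ι) : ℝ :=
  P (μ a) - c * ∑ b, Θ (μ a - μ b) - n a

theorem hasDerivAt_betheMap_line {P Θ P' Θ' : ℝ → ℝ} (hP : ∀ y, HasDerivAt P (P' y) y)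
    (hΘ : ∀ y, HasDerivAt Θ (Θ' y) y) (c : ℝ) (n x v : ι → ℝ) :
    HasDerivAt (fun t : ℝ => betheMap P Θ c n (x + t • v))
      (fun a => P' (x a) * v a - c * weightedLaplacian (fun a b => Θ' (x a - x b)) v a) 0 := by
  have hline : ∀ b, HasDerivAt (fun t : ℝ => (x + t • v) b) (v b) 0 := fun b => by
    simpa using ((hasDerivAt_id (0 : ℝ)).mul_const (v b)).const_add (x b)
  refine hasDerivAt_pi.mpr fun a => ?_
  have hPa : HasDerivAt (fun t : ℝ => P ((x + t • v) a)) (P' (x a) * v a) 0 := by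
    have h := (hP ((x + (0 : ℝ) • v) a)).comp 0 (hline a)
    rwa [zero_smul, add_zero] at h
  have hΘa : ∀ b, HasDerivAt (fun t : ℝ => Θ ((x + t • v) a - (x + t • v) b))
      (Θ' (x a - x b) * (v a - v b)) 0 := fun b => by
    have h := (hΘ ((x + (0 : ℝ) • v) a - (x + (0 : ℝ) • v) b)).comp 0 ((hline a).sub (hline b))
    rwa [zero_smul, add_zero] at h
  exact (hPa.sub ((HasDerivAt.fun_sum fun b _ => hΘa b).const_mul c)).sub_const (n a)

end Bethe

noncomputable def momentumDeriv (ζ x : ℝ) : ℝ := sin ζ / (sinh x ^ 2 + sin (ζ / 2) ^ 2)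

noncomputable def phaseDeriv (ζ x : ℝ) : ℝ := sin (2 * ζ) / (sinh x ^ 2 + sin ζ ^ 2)

theorem momentumDeriv_pos {ζ : ℝ} (h0 : 0 < ζ) (hπ : ζ < π) (x : ℝ) : 0 < momentumDeriv ζ x := by
  have : 0 < sin (ζ / 2) := sin_pos_of_pos_of_lt_pi (by linarith) (by linarith)
  exact div_pos (sin_pos_of_pos_of_lt_pi h0 hπ) (by positivity)

theorem phaseDeriv_nonpos {ζ : ℝ} (h1 : π / 2 ≤ ζ) (h2 : ζ ≤ π) (x : ℝ) : phaseDeriv ζ x ≤ 0 := by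
  have hsin : 0 ≤ sin ζ := sin_nonneg_of_nonneg_of_le_pi (by linarith [pi_pos]) h2
  have hcos : cos ζ ≤ 0 := cos_nonpos_of_pi_div_two_le_of_le h1 (by linarith [pi_pos])
  refine div_nonpos_of_nonpos_of_nonneg ?_ (by positivity)
  rw [sin_two_mul]
  nlinarith

theorem phaseDeriv_neg (ζ x : ℝ) : phaseDeriv ζ (-x) = phaseDeriv ζ x := by
  rw [phaseDeriv, phaseDeriv, sinh_neg, neg_sq]

theorem phaseDeriv_div_two_pi (ζ x : ℝ) :
    phaseDeriv ζ x / (2 * π) = sin (2 * ζ) / (2 * π * (sinh x ^ 2 + sin ζ ^ 2)) := by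
  rw [phaseDeriv, div_div, mul_comm (_ + _)]

theorem yang_yang_hessian_posdef_general (ζ : ℝ) (hζ1 : π / 2 ≤ ζ) (hζ2 : ζ < π)
    (N L : ℕ)
    (𝔭 ϑ : ℝ → ℝ)
    (h𝔭 : ∀ x, HasDerivAt 𝔭 (Real.sin ζ / (Real.sinh x ^ 2 + Real.sin (ζ / 2) ^ 2)) x)
    (hϑ : ∀ x, HasDerivAt ϑ (Real.sin (2 * ζ) / (Real.sinh x ^ 2 + Real.sin ζ ^ 2)) x)
    (n : Fin N → ℝ) :
    -- positive definiteness of the Hessian of the Yang–Yang action at any point μ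
    (∀ μ : Fin N → ℝ, ∀ h : Fin N → ℝ, h ≠ 0 →
      0 < ∑ j, ∑ k, h j * h k *
        ((if j = k then
            Real.sin ζ / (Real.sinh (μ k) ^ 2 + Real.sin (ζ / 2) ^ 2) / (2 * π)
              - (1 / (L : ℝ)) * ∑ b,
                  Real.sin (2 * ζ) / (2 * π * (Real.sinh (μ k - μ b) ^ 2 + Real.sin ζ ^ 2))
          else 0)
          + Real.sin (2 * ζ) / (2 * π * (Real.sinh (μ j - μ k) ^ 2 + Real.sin ζ ^ 2)) / L)) ∧
    -- the critical point equations (logarithmic Bethe equations) have at most one solution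
    (∀ μ ν : Fin N → ℝ,
      (∀ a, 𝔭 (μ a) / (2 * π) - (1 / (2 * π * L)) * ∑ b, ϑ (μ a - μ b) - n a / L = 0) →
      (∀ a, 𝔭 (ν a) / (2 * π) - (1 / (2 * π * L)) * ∑ b, ϑ (ν a - ν b) - n a / L = 0) →
      μ = ν) := by
  have hA : ∀ y, 0 < momentumDeriv ζ y / (2 * π) := fun y =>
    div_pos (momentumDeriv_pos (by linarith [pi_pos]) hζ2 y) two_pi_pos
  have hG : ∀ y, phaseDeriv ζ y ≤ 0 := phaseDeriv_nonpos hζ1 hζ2.le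
  have hG_symm : ∀ (x : Fin N → ℝ) a b, phaseDeriv ζ (x a - x b) = phaseDeriv ζ (x b - x a) :=
    fun x a b => by rw [← neg_sub, phaseDeriv_neg]
  constructor
  · intro μ h hh
    have := sum_mul_sub_weightedLaplacian_pos (fun k => hA (μ k)) (c := 1 / L) (by positivity)
      (G := fun j k => phaseDeriv ζ (μ j - μ k) / (2 * π)) (fun j k => by rw [hG_symm])
      (fun j k => div_nonpos_of_nonpos_of_nonneg (hG _) two_pi_pos.le) hh
    rw [← sum_sum_mul_ite_add_eq_sum_mul_weightedLaplacian] at this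
    simpa only [momentumDeriv, phaseDeriv_div_two_pi, one_div_mul_eq_div] using this
  · intro μ ν hμ hν
    refine injective_of_hasDerivAt_line_of_sum_mul_pos
      (F := betheMap (fun y => 𝔭 y / (2 * π)) ϑ (1 / (2 * π * L)) (fun a => n a / L))
      (fun x v => hasDerivAt_betheMap_line (P' := fun y => momentumDeriv ζ y / (2 * π))
        (Θ' := phaseDeriv ζ) (fun y => (h𝔭 y).div_const (2 * π)) hϑ _ _ x v)
      (fun x v hv => sum_mul_sub_weightedLaplacian_pos (fun a => hA (x a)) (by positivity)
        (hG_symm x) (fun a b => hG _) hv)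
      (funext fun a => (hμ a).trans (hν a).symm)

/-- For `ζ ∈ [π/2, π)` (so `Δ = cos ζ ∈ (-1, 0]`), the Hessian of the Yang–Yang action
is positive definite at every point of `ℝ^N`; in particular the action is strictly
convex and the logarithmic Bethe equations (its critical point equations) admit at
most one solution. Here `p'(λ) = sin ζ/(sinh²λ + sin²(ζ/2))` and
`K(λ) = sin(2ζ)/(2π(sinh²λ + sin²ζ)) = θ'(λ)/(2π)`. -/
theorem yang_yang_hessian_posdef (ζ : ℝ) (hζ1 : π / 2 ≤ ζ) (hζ2 : ζ < π)
    (N L : ℕ) (hN : 0 < N) (hL : 0 < L)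
    (𝔭 ϑ : ℝ → ℝ)
    (h𝔭 : ∀ x, HasDerivAt 𝔭 (Real.sin ζ / (Real.sinh x ^ 2 + Real.sin (ζ / 2) ^ 2)) x)
    (hϑ : ∀ x, HasDerivAt ϑ (Real.sin (2 * ζ) / (Real.sinh x ^ 2 + Real.sin ζ ^ 2)) x)
    (hϑodd : ∀ x, ϑ (-x) = -ϑ x)
    (n : Fin N → ℝ) :
    -- positive definiteness of the Hessian of the Yang–Yang action at any point μ
    (∀ μ : Fin N → ℝ, ∀ h : Fin N → ℝ, h ≠ 0 →
      0 < ∑ j, ∑ k, h j * h k *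
        ((if j = k then
            Real.sin ζ / (Real.sinh (μ k) ^ 2 + Real.sin (ζ / 2) ^ 2) / (2 * π)
              - (1 / (L : ℝ)) * ∑ b,
                  Real.sin (2 * ζ) / (2 * π * (Real.sinh (μ k - μ b) ^ 2 + Real.sin ζ ^ 2))
          else 0)
          + Real.sin (2 * ζ) / (2 * π * (Real.sinh (μ j - μ k) ^ 2 + Real.sin ζ ^ 2)) / L)) ∧
    -- the critical point equations (logarithmic Bethe equations) have at most one solution
    (∀ μ ν : Fin N → ℝ,
      (∀ a, 𝔭 (μ a) / (2 * π) - (1 / (2 * π * L)) * ∑ b, ϑ (μ a - μ b) - n a / L = 0) →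
      (∀ a, 𝔭 (ν a) / (2 * π) - (1 / (2 * π * L)) * ∑ b, ϑ (ν a - ν b) - n a / L = 0) →
      μ = ν) :=
  yang_yang_hessian_posdef_general ζ hζ1 hζ2 N L 𝔭 ϑ h𝔭 hϑ n
end

section
/- For Δ > 1 (Δ = cosh ζ), the Yang–Yang action S(μ) = Σ_a P(μ_a)/(2π) − (1/(4πL))Σ_{a,b}Θ(μ_a−μ_b) − Σ_a μ_a n_a/L, where P(λ) = λ²/2 + O(|λ|) and Θ(λ) = λ²/2 + O(|λ|) as |λ|→∞, satisfies S(μ) → +∞ as ‖μ‖ → ∞ provided N/L ≤ 1/2; hence S attains a global minimum on ℝ^N. -/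
open Real

set_option maxHeartbeats 1000000 in
/-- For `Δ > 1`, the Yang–Yang action
`S(μ) = Σ_a P(μ_a)/(2π) - (1/(4πL)) Σ_{a,b} Θ(μ_a - μ_b) - Σ_a μ_a n_a / L`,
with `P(λ) = λ²/2 + O(|λ|)` and `Θ(λ) = λ²/2 + O(|λ|)`, tends to `+∞` as
`‖μ‖ → ∞` provided `2N ≤ L`; hence it attains a global minimum on `ℝ^N`. -/
theorem yang_yang_action_coercive_massive (N L : ℕ) (hN : 0 < N) (h2N : 2 * N ≤ L)
    (P Θ : ℝ → ℝ) (hPc : Continuous P) (hΘc : Continuous Θ)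
    (C : ℝ)
    (hP : ∀ x : ℝ, |P x - x ^ 2 / 2| ≤ C * (|x| + 1))
    (hΘ : ∀ x : ℝ, |Θ x - x ^ 2 / 2| ≤ C * (|x| + 1))
    (n : Fin N → ℝ)
    (S : (Fin N → ℝ) → ℝ)
    (hS : ∀ μ : Fin N → ℝ,
      S μ = (∑ a, P (μ a)) / (2 * π)
              - (1 / (4 * π * L)) * ∑ a, ∑ b, Θ (μ a - μ b)
              - ∑ a, μ a * n a / L) :
    Filter.Tendsto S (Filter.cocompact (Fin N → ℝ)) Filter.atTop ∧
    ∃ μ₀ : Fin N → ℝ, ∀ μ, S μ₀ ≤ S μ := by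
  haveI : Nonempty (Fin N) := ⟨⟨0, hN⟩⟩
  have hπ : (0:ℝ) < π := pi_pos
  have hπ3 : (3:ℝ) < π := pi_gt_three
  have hL1 : (1:ℝ) ≤ (L:ℝ) := by exact_mod_cast (by omega : 1 ≤ L)
  have hL0 : (0:ℝ) < (L:ℝ) := by linarith
  have hNL : 2*(N:ℝ) ≤ (L:ℝ) := by exact_mod_cast h2N
  have hC : 0 ≤ C := by
    have h := hP 0
    have h0 : (0:ℝ) ≤ |P 0 - 0 ^ 2 / 2| := abs_nonneg _
    simpa using le_trans h0 h
  set K : ℝ := C*(N:ℝ) + C*(N:ℝ)^2 + (∑ a, |n a|) + 1 with hK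
  have hn0 : 0 ≤ ∑ a, |n a| := Finset.sum_nonneg fun a _ => abs_nonneg _
  have hK0 : 0 < K := by positivity
  -- key coercivity bound
  have key : ∀ μ : Fin N → ℝ, ‖μ‖^2/(8*π) - K*(‖μ‖+1) ≤ S μ := by
    intro μ
    set r := ‖μ‖ with hr
    have hr0 : 0 ≤ r := norm_nonneg μ
    have habs : ∀ a, |μ a| ≤ r := fun a => by
      simpa [Real.norm_eq_abs] using norm_le_pi_norm μ a
    set Q : ℝ := ∑ a, (μ a)^2 with hQ
    have hQ0 : 0 ≤ Q := Finset.sum_nonneg fun a _ => sq_nonneg _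
    -- r^2 ≤ Q
    have hsq : r^2 ≤ Q := by
      obtain ⟨a, _, ha⟩ := Finset.exists_mem_eq_sup Finset.univ Finset.univ_nonempty
        (fun i => ‖μ i‖₊)
      have hra : r = |μ a| := by
        rw [hr, Pi.norm_def, ha]
        simp [Real.norm_eq_abs]
      rw [hra, sq_abs]
      exact Finset.single_le_sum (fun i _ => sq_nonneg (μ i)) (Finset.mem_univ a)
    -- P lower bound
    have h1 : Q/2 - C*(N:ℝ)*(r+1) ≤ ∑ a, P (μ a) := by
      have hterm : ∀ a ∈ Finset.univ, (μ a)^2/2 - C*(r+1) ≤ P (μ a) := by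
        intro a _
        have h := (abs_le.1 (hP (μ a))).1
        have hb := habs a
        nlinarith [abs_nonneg (μ a)]
      calc Q/2 - C*(N:ℝ)*(r+1) = ∑ a, ((μ a)^2/2 - C*(r+1)) := by
            rw [Finset.sum_sub_distrib, Finset.sum_const, Finset.card_univ, ← Finset.sum_div]
            simp [hQ]
            ring
        _ ≤ ∑ a, P (μ a) := Finset.sum_le_sum hterm
    -- Θ double sum upper bound
    have hexp : ∑ a, ∑ b, (μ a - μ b)^2 ≤ 2*(N:ℝ)*Q := by
      have e : (∑ a, μ a) * (∑ b, μ b) = ∑ a, ∑ b, μ a * μ b :=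
        Finset.sum_mul_sum Finset.univ Finset.univ (fun a => μ a) (fun b => μ b)
      have e2 : ∑ a : Fin N, ∑ b : Fin N, ((μ a)^2 + (μ b)^2) = 2*(N:ℝ)*Q := by
        calc ∑ a : Fin N, ∑ b : Fin N, ((μ a)^2 + (μ b)^2)
            = ∑ a : Fin N, ((N:ℝ)*(μ a)^2 + Q) := by
              refine Finset.sum_congr rfl fun a _ => ?_
              rw [Finset.sum_add_distrib, Finset.sum_const, Finset.card_univ]
              simp [hQ, nsmul_eq_mul]
          _ = (N:ℝ)*Q + (N:ℝ)*Q := by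
              rw [Finset.sum_add_distrib, Finset.sum_const, ← Finset.mul_sum,
                Finset.card_univ]
              simp [hQ, nsmul_eq_mul]
          _ = 2*(N:ℝ)*Q := by ring
      have e3 : ∑ a, ∑ b, (μ a - μ b)^2
          = (∑ a : Fin N, ∑ b : Fin N, ((μ a)^2 + (μ b)^2)) - 2*(∑ a, ∑ b, μ a * μ b) := by
        calc ∑ a, ∑ b, (μ a - μ b)^2
            = ∑ a, ((∑ b, ((μ a)^2 + (μ b)^2)) - 2*(∑ b, μ a * μ b)) :=
              Finset.sum_congr rfl fun a _ => by
                rw [Finset.mul_sum, ← Finset.sum_sub_distrib]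
                exact Finset.sum_congr rfl fun b _ => by ring
          _ = (∑ a : Fin N, ∑ b : Fin N, ((μ a)^2 + (μ b)^2)) - 2*(∑ a, ∑ b, μ a * μ b) := by
              rw [Finset.sum_sub_distrib, ← Finset.mul_sum]
      rw [e3, e2, ← e]
      nlinarith [mul_self_nonneg (∑ a, μ a)]
    have h2 : ∑ a, ∑ b, Θ (μ a - μ b) ≤ (N:ℝ)*Q + 2*C*(N:ℝ)^2*(r+1) := by
      have hterm : ∀ a b : Fin N, Θ (μ a - μ b) ≤ (μ a - μ b)^2/2 + 2*C*(r+1) := by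
        intro a b
        have h := (abs_le.1 (hΘ (μ a - μ b))).2
        have hab : |μ a - μ b| ≤ 2*r := by
          calc |μ a - μ b| ≤ |μ a| + |μ b| := abs_sub _ _
            _ ≤ 2*r := by linarith [habs a, habs b]
        nlinarith [mul_le_mul_of_nonneg_left hab hC, abs_nonneg (μ a - μ b)]
      calc ∑ a, ∑ b, Θ (μ a - μ b)
          ≤ ∑ a, ∑ b, ((μ a - μ b)^2/2 + 2*C*(r+1)) :=
            Finset.sum_le_sum fun a _ => Finset.sum_le_sum fun b _ => hterm a b
        _ = (∑ a, ∑ b, (μ a - μ b)^2)/2 + (N:ℝ)^2*(2*C*(r+1)) := by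
            simp [Finset.sum_add_distrib, Finset.sum_div, Finset.card_univ]
            ring
        _ ≤ (N:ℝ)*Q + 2*C*(N:ℝ)^2*(r+1) := by linarith
    -- linear term
    have h3 : ∑ a, μ a * n a / (L:ℝ) ≤ (∑ a, |n a|) * (r+1) := by
      calc ∑ a, μ a * n a / (L:ℝ) ≤ ∑ a, |n a| * (r+1) := by
            apply Finset.sum_le_sum
            intro a _
            have e1 : μ a * n a / (L:ℝ) ≤ |μ a| * |n a| / (L:ℝ) := by
              apply div_le_div_of_nonneg_right ?_ hL0.le
              calc μ a * n a ≤ |μ a * n a| := le_abs_self _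
                _ = |μ a| * |n a| := abs_mul _ _
            have e2 : |μ a| * |n a| / (L:ℝ) ≤ |μ a| * |n a| :=
              div_le_self (by positivity) hL1
            have e3 : |μ a| * |n a| ≤ |n a| * (r+1) := by
              nlinarith [habs a, abs_nonneg (n a), hr0]
            linarith
        _ = (∑ a, |n a|) * (r+1) := by rw [← Finset.sum_mul]
    -- assemble
    rw [hS μ]
    set x : ℝ := 1/(2*π) with hx
    set y : ℝ := 1/(4*π*(L:ℝ)) with hy
    have hx0 : 0 < x := by positivity
    have hy0 : 0 < y := by positivity
    have hx1 : x ≤ 1 := by rw [hx]; rw [div_le_one (by positivity)]; linarith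
    have hy2 : y ≤ 1/2 := by
      rw [hy]
      exact one_div_le_one_div_of_le two_pos (by nlinarith)
    have hxy : (N:ℝ)*y ≤ x/4 := by
      rw [hx, hy, mul_one_div]
      rw [div_le_div_iff₀ (by positivity) (by positivity)]
      have h2L : 1/(2*π)*(4*π*(L:ℝ)) = 2*(L:ℝ) := by
        field_simp
        ring
      linarith
    have eq1 : (∑ a, P (μ a)) / (2*π) = (∑ a, P (μ a)) * x := by
      rw [hx]; ring
    have eq2 : (1/(4*π*(L:ℝ))) * (∑ a, ∑ b, Θ (μ a - μ b))
        = (∑ a, ∑ b, Θ (μ a - μ b)) * y := by rw [hy]; ring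
    have eq3 : r^2/(8*π) = r^2 * x / 4 := by rw [hx]; ring
    rw [eq1, eq2, eq3]
    have i1 : (Q/2 - C*(N:ℝ)*(r+1)) * x ≤ (∑ a, P (μ a)) * x :=
      mul_le_mul_of_nonneg_right h1 hx0.le
    have i2 : (∑ a, ∑ b, Θ (μ a - μ b)) * y
        ≤ ((N:ℝ)*Q + 2*C*(N:ℝ)^2*(r+1)) * y :=
      mul_le_mul_of_nonneg_right h2 hy0.le
    have i3 : (N:ℝ)*y*Q ≤ x/4*Q := mul_le_mul_of_nonneg_right hxy hQ0
    have i4 : 2*C*(N:ℝ)^2*(r+1)*y ≤ 2*C*(N:ℝ)^2*(r+1)*(1/2) :=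
      mul_le_mul_of_nonneg_left hy2 (by positivity)
    have i5 : C*(N:ℝ)*(r+1)*x ≤ C*(N:ℝ)*(r+1)*1 :=
      mul_le_mul_of_nonneg_left hx1 (by positivity)
    have i6 : r^2*x ≤ Q*x := mul_le_mul_of_nonneg_right hsq hx0.le
    have i2' : (∑ a, ∑ b, Θ (μ a - μ b)) * y
        ≤ (N:ℝ)*y*Q + 2*C*(N:ℝ)^2*(r+1)*y := by nlinarith
    have i1' : Q*x/2 - C*(N:ℝ)*(r+1)*x ≤ (∑ a, P (μ a)) * x := by nlinarith
    rw [hK]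
    linarith
  -- coercive scalar function tends to atTop
  have hco : Filter.Tendsto (fun r : ℝ => r^2/(8*π) - K*(r+1)) Filter.atTop Filter.atTop := by
    have heq : (fun r : ℝ => r^2/(8*π) - K*(r+1))
        = fun r => (r * (r/(8*π) - K)) + (-K) := by
      funext r; field_simp; ring
    rw [heq]
    apply Filter.tendsto_atTop_add_const_right
    apply Filter.Tendsto.atTop_mul_atTop₀ Filter.tendsto_id
    apply Filter.tendsto_atTop_add_const_right
    exact Filter.tendsto_id.atTop_div_const (by positivity)
  have htend : Filter.Tendsto S (Filter.cocompact (Fin N → ℝ)) Filter.atTop := by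
    have hnorm : Filter.Tendsto (fun μ : Fin N → ℝ => ‖μ‖)
        (Filter.cocompact (Fin N → ℝ)) Filter.atTop := tendsto_norm_cocompact_atTop
    exact Filter.tendsto_atTop_mono key (hco.comp hnorm)
  have hScont : Continuous S := by
    have heq : S = fun μ => (∑ a, P (μ a)) / (2 * π)
        - (1 / (4 * π * L)) * ∑ a, ∑ b, Θ (μ a - μ b)
        - ∑ a, μ a * n a / L := funext hS
    rw [heq]
    fun_prop
  exact ⟨htend, hScont.exists_forall_le htend⟩
end

section
/- Let f : ℝ → ℝ be strictly increasing, continuous, and satisfy f(x+π) − f(x) = (L−N)/L for all x, with N, L positive integers, 2N ≤ L. Suppose x₁ < … < x_N are real numbers with f(x_a) = ℓ_a/L for distinct integers ℓ₁ < … < ℓ_N with ℓ_N − ℓ₁ ≤ M. Suppose additionally |f'| ≤ B on ℝ (f differentiable). Then x_N − x₁ ≤ π(M/(L−N)·L + B·π·L/(L−N) + 1), i.e. x_N − x₁ is bounded by a constant depending only on M, B, N/L (uniformly in L). -/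
/-!
Quasi-periodicity gives `f (a + p π) = f a + p (L - N)/L` for every natural `p`. If `p` is the
number of whole periods in `[x₁, x_N]`, monotonicity gives `p (L - N)/L ≤ f x_N - f x₁ ≤ M/L`,
so `p ≤ M/(L - N)`, and `x_N - x₁ < (p + 1) π`.
-/

open Real

theorem add_nsmul_of_forall_add_sub {α β : Type*} [AddMonoid α] [AddCommGroup β] {f : α → β}
    {T : α} {c : β} (hf : ∀ x, f (x + T) - f x = c) (n : ℕ) (y : α) :
    f (y + n • T) = f y + n • c := by
  induction n with
  | zero => simp
  | succ n ih =>
    rw [succ_nsmul, ← add_assoc, ← sub_add_cancel (f _) (f (y + n • T)), hf, ih, succ_nsmul]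
    abel

theorem sub_le_mul_of_monotone_of_forall_add_sub {f : ℝ → ℝ} {T c a b : ℝ} (hmono : Monotone f)
    (hT : 0 < T) (hc : 0 < c) (hf : ∀ x, f (x + T) - f x = c) (hab : a ≤ b) :
    b - a ≤ T * ((f b - f a) / c + 1) := by
  set p := ⌊(b - a) / T⌋₊
  have hpT : p * T ≤ b - a :=
    (le_div_iff₀ hT).1 (Nat.floor_le (div_nonneg (sub_nonneg.2 hab) hT.le))
  have hpc : p * c ≤ f b - f a := by
    have := hmono (show a + p • T ≤ b by rw [nsmul_eq_mul]; linarith)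
    rw [add_nsmul_of_forall_add_sub hf, nsmul_eq_mul] at this
    linarith
  have hlt : b - a < T * (p + 1) := by
    rw [mul_comm, ← div_lt_iff₀ hT]
    exact Nat.lt_floor_add_one _
  calc b - a ≤ T * (p + 1) := hlt.le
    _ ≤ T * ((f b - f a) / c + 1) := by
      gcongr
      rwa [le_div_iff₀ hc]

/-- Boundedness of Bethe roots in the massive regime `Δ > 1`: if `f` is strictly
increasing, differentiable with `|f'| ≤ B`, and π-quasi-periodic with increment
`(L-N)/L`, and `x₁ < … < x_N` satisfy `f(x_a) = ℓ_a / L` for integers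
`ℓ₁ < … < ℓ_N` with `ℓ_N - ℓ₁ ≤ M`, then `x_N - x₁` is bounded by a constant
depending only on `M`, `B` and `N/L`. -/
theorem bethe_roots_bounded_massive (N L M : ℕ) (hN : 0 < N) (h2N : 2 * N ≤ L)
    (B : ℝ) (hB : 0 ≤ B)
    (f : ℝ → ℝ) (hmono : StrictMono f)
    (hquasi : ∀ x : ℝ, f (x + π) - f x = ((L : ℝ) - N) / L)
    (x : Fin N → ℝ) (ℓ : Fin N → ℤ) (hx : StrictMono x)
    (hf : ∀ a, f (x a) = (ℓ a : ℝ) / L)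
    (hM : ℓ ⟨N - 1, by omega⟩ - ℓ ⟨0, hN⟩ ≤ (M : ℤ)) :
    x ⟨N - 1, by omega⟩ - x ⟨0, hN⟩
      ≤ π * ((M : ℝ) / ((L : ℝ) - N) * L + B * π * L / ((L : ℝ) - N) + 1) := by
  have hNL : (N : ℝ) + 1 ≤ L := by norm_cast; omega
  have hLN : 0 < (L : ℝ) - N := by linarith
  have hL : 0 < (L : ℝ) := by linarith
  have hx_le : x ⟨0, hN⟩ ≤ x ⟨N - 1, by omega⟩ := hx.monotone (Nat.zero_le _)
  have hspread := sub_le_mul_of_monotone_of_forall_add_sub hmono.monotone pi_pos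
    (div_pos hLN hL) hquasi hx_le
  have hfM : f (x ⟨N - 1, by omega⟩) - f (x ⟨0, hN⟩) ≤ M / L := by
    rw [hf, hf, div_sub_div_same]
    gcongr
    exact_mod_cast hM
  calc _ ≤ π * (((M : ℝ) / L) / ((L - N) / L) + 1) := hspread.trans (by gcongr)
    _ = π * ((M : ℝ) / (L - N) + 1) := by field_simp
    _ ≤ π * ((M : ℝ) / (L - N) * L + B * π * L / (L - N) + 1) := by
      have hM_le : (M : ℝ) / (L - N) ≤ M / (L - N) * L :=
        le_mul_of_one_le_right (by positivity) (by linarith)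
      have hB_nonneg : 0 ≤ B * π * L / (L - N) := by positivity
      gcongr π * ?_
      linarith
end

section
/- Let ζ ∈ (0, π/2], Δ = cos ζ, and suppose λ₁,…,λ_N solve the logarithmic Bethe equations p(λ_a)/(2π) − (1/(2πL))Σ_b θ(λ_a − λ_b) + (N+1)/(2L) = ℓ_a/L with all ℓ_a ∈ {1,…,N}, where θ is odd, strictly increasing, and bounded by π−2ζ in absolute value, and p is odd, strictly increasing. If ν is the maximal root, then p(ν)/(2π) < (π−ζ)/π · N/L; consequently ν ≤ p^{−1}(2(π−ζ)N/L) whenever 2(π−ζ)N/L lies in the range of p. -/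
open Real

/-! Bounding every phase θ(λ_a − λ_b) by π − 2ζ and ℓ_a by N, the Bethe equation gives
p(λ_a)/(2π) ≤ (π − ζ)N/(πL) − 1/(2L); the bound on the root itself follows since p is
increasing. -/

theorem bethe_momentum_le_of_phase_le {N : ℕ} {p θ : ℝ → ℝ} {L : ℕ} {lam : Fin N → ℝ} {ℓ B : ℝ}
    (hθ : ∀ x, θ x ≤ B) {a : Fin N}
    (hBethe : p (lam a) / (2 * π) - (1 / (2 * π * L)) * ∑ b, θ (lam a - lam b)
        + ((N : ℝ) + 1) / (2 * L) = ℓ / L) :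
    p (lam a) / (2 * π) ≤ ℓ / L - ((N : ℝ) + 1) / (2 * L) + N * B / (2 * π * L) := by
  have hsum : ∑ b, θ (lam a - lam b) ≤ N * B := by
    simpa using Finset.sum_le_card_nsmul Finset.univ _ B fun b _ => hθ (lam a - lam b)
  have hphase : (1 / (2 * π * L)) * ∑ b, θ (lam a - lam b) ≤ N * B / (2 * π * L) := by
    rw [one_div_mul_eq_div]
    gcongr
  linarith

theorem bethe_phase_bound_eq (ζ : ℝ) (N L : ℝ) :
    N / L - (N + 1) / (2 * L) + N * (π - 2 * ζ) / (2 * π * L)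
      = (π - ζ) / π * (N / L) - 1 / (2 * L) := by
  field_simp
  ring

theorem max_bethe_root_bound_general (ζ : ℝ)
    (p θ : ℝ → ℝ)
    (hpmono : StrictMono p)
    (hθbdd : ∀ x, |θ x| ≤ π - 2 * ζ)
    (N L : ℕ) (hL : 0 < L)
    (lam : Fin N → ℝ) (ℓ : Fin N → ℤ)
    (hℓ : ∀ a, 1 ≤ ℓ a ∧ ℓ a ≤ (N : ℤ))
    (hBethe : ∀ a, p (lam a) / (2 * π) - (1 / (2 * π * L)) * ∑ b, θ (lam a - lam b)
        + ((N : ℝ) + 1) / (2 * L) = (ℓ a : ℝ) / L)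
    (a₀ : Fin N) :
    p (lam a₀) / (2 * π) < (π - ζ) / π * ((N : ℝ) / L) ∧
    ∀ y : ℝ, p y = 2 * (π - ζ) * ((N : ℝ) / L) → lam a₀ ≤ y := by
  have hroot := bethe_momentum_le_of_phase_le (fun x => (abs_le.mp (hθbdd x)).2) (hBethe a₀)
  have hℓN : (ℓ a₀ : ℝ) / L ≤ N / L := by
    gcongr
    exact_mod_cast (hℓ a₀).2
  have hbound : p (lam a₀) / (2 * π) < (π - ζ) / π * ((N : ℝ) / L) := by
    have : (0 : ℝ) < 1 / (2 * L) := by positivity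
    linarith [bethe_phase_bound_eq ζ N L]
  refine ⟨hbound, fun y hy => (hpmono.lt_iff_lt.mp ?_).le⟩
  calc p (lam a₀) = p (lam a₀) / (2 * π) * (2 * π) := by field_simp
    _ < (π - ζ) / π * (N / L) * (2 * π) := by gcongr
    _ = p y := by rw [hy]; field_simp

/-- For `ζ ∈ (0, π/2]`, `Δ = cos ζ`, if `λ₁, …, λ_N` solve the logarithmic Bethe
equations with all integers `ℓ_a ∈ {1, …, N}`, `θ` odd strictly increasing with
`|θ| ≤ π - 2ζ` and `p` odd strictly increasing, then the maximal root `ν` satisfies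
`p(ν)/(2π) < (π-ζ)/π · N/L`; consequently `ν ≤ p⁻¹(2(π-ζ)N/L)` whenever the latter
value is attained by `p`. -/
theorem max_bethe_root_bound (ζ : ℝ) (hζ1 : 0 < ζ) (hζ2 : ζ ≤ π / 2)
    (p θ : ℝ → ℝ)
    (hpodd : ∀ x, p (-x) = -p x) (hpmono : StrictMono p)
    (hθodd : ∀ x, θ (-x) = -θ x) (hθmono : StrictMono θ)
    (hθbdd : ∀ x, |θ x| ≤ π - 2 * ζ)
    (N L : ℕ) (hN : 0 < N) (hL : 0 < L)
    (lam : Fin N → ℝ) (ℓ : Fin N → ℤ)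
    (hℓ : ∀ a, 1 ≤ ℓ a ∧ ℓ a ≤ (N : ℤ))
    (hBethe : ∀ a, p (lam a) / (2 * π) - (1 / (2 * π * L)) * ∑ b, θ (lam a - lam b)
        + ((N : ℝ) + 1) / (2 * L) = (ℓ a : ℝ) / L)
    (a₀ : Fin N) (hmax : ∀ b, lam b ≤ lam a₀) :
    p (lam a₀) / (2 * π) < (π - ζ) / π * ((N : ℝ) / L) ∧
    ∀ y : ℝ, p y = 2 * (π - ζ) * ((N : ℝ) / L) → lam a₀ ≤ y :=
  max_bethe_root_bound_general ζ p θ hpmono hθbdd N L hL lam ℓ hℓ hBethe a₀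
end

section
/- Let (f_L) be a sequence of functions holomorphic on a compact set X ⊂ ℂ containing a segment I = [a,b] in its interior, converging uniformly on X to f, where f is holomorphic with f' ≠ 0 and of constant sign on I. Then there exist η, ε > 0 such that f is a biholomorphism from the box S_{2η,2ε}(I) = {z : |Im z| < 2η, dist(Re z, I) < 2ε} onto its image. -/
open Real

/-- The open box neighbourhood `S_{η,ε}([a,b]) = {z : |Im z| < η, dist(Re z, [a,b]) < ε}`. -/
def boxNbhd (a b η ε : ℝ) : Set ℂ :=
  {z : ℂ | |z.im| < η ∧ a - ε < z.re ∧ z.re < b + ε}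

lemma boxNbhd_eq (a b η ε : ℝ) :
    boxNbhd a b η ε =
      Complex.im ⁻¹' Set.Ioo (-η) η ∩ Complex.re ⁻¹' Set.Ioo (a - ε) (b + ε) := by
  ext z
  simp only [boxNbhd, Set.mem_setOf_eq, Set.mem_inter_iff, Set.mem_preimage, Set.mem_Ioo, abs_lt]

lemma convex_boxNbhd (a b η ε : ℝ) : Convex ℝ (boxNbhd a b η ε) := by
  rw [boxNbhd_eq]
  exact ((convex_Ioo _ _).linear_preimage Complex.imLm).inter
    ((convex_Ioo _ _).linear_preimage Complex.reLm)

lemma isOpen_boxNbhd (a b η ε : ℝ) : IsOpen (boxNbhd a b η ε) := by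
  rw [boxNbhd_eq]
  exact (isOpen_Ioo.preimage Complex.continuous_im).inter
    (isOpen_Ioo.preimage Complex.continuous_re)

/-- Noshiro–Warschawski: a holomorphic function whose derivative has positive real part
on a convex open set is injective there. -/
lemma injOn_of_re_deriv_pos {s : Set ℂ} (hc : Convex ℝ s) (ho : IsOpen s)
    {f : ℂ → ℂ} (hf : DifferentiableOn ℂ f s)
    (hd : ∀ z ∈ s, 0 < (deriv f z).re) : Set.InjOn f s := by
  intro z hz w hw hfzw
  by_contra hne
  have hwz : w - z ≠ 0 := sub_ne_zero.mpr (Ne.symm hne)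
  set γ : ℝ → ℂ := fun t => z + (t : ℂ) * (w - z) with hγ
  have hmem : ∀ t ∈ Set.Icc (0:ℝ) 1, γ t ∈ s := by
    intro t ht
    have h := hc hz hw (by linarith [ht.2] : (0:ℝ) ≤ 1 - t) ht.1 (by ring)
    have heq : (1 - t) • z + t • w = γ t := by
      simp only [hγ, Complex.real_smul]
      push_cast
      ring
    rwa [heq] at h
  set u : ℝ → ℝ := fun t => (f (γ t) / (w - z)).re with hu
  have hder : ∀ t ∈ Set.Icc (0:ℝ) 1, HasDerivAt u (deriv f (γ t)).re t := by
    intro t ht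
    have h1 : HasDerivAt (fun ζ : ℂ => z + ζ * (w - z)) (w - z) (t : ℂ) := by
      simpa using ((hasDerivAt_id (t : ℂ)).mul_const (w - z)).const_add z
    have h2 : HasDerivAt f (deriv f (γ t)) (z + (t : ℂ) * (w - z)) :=
      (hf.differentiableAt (ho.mem_nhds (hmem t ht))).hasDerivAt
    have h3 : HasDerivAt (fun ζ : ℂ => f (z + ζ * (w - z)) / (w - z))
        (deriv f (γ t) * (w - z) / (w - z)) (t : ℂ) :=
      (HasDerivAt.comp (t : ℂ) h2 h1).div_const _
    rw [mul_div_assoc, div_self hwz, mul_one] at h3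
    exact h3.real_of_complex
  have hcont : ContinuousOn u (Set.Icc 0 1) := fun t ht =>
    ((hder t ht).continuousAt).continuousWithinAt
  have hmono : StrictMonoOn u (Set.Icc 0 1) := by
    apply strictMonoOn_of_hasDerivWithinAt_pos (convex_Icc 0 1) hcont
    · intro t ht
      rw [interior_Icc] at ht
      exact (hder t ⟨ht.1.le, ht.2.le⟩).hasDerivWithinAt
    · intro t ht
      rw [interior_Icc] at ht
      exact hd _ (hmem t ⟨ht.1.le, ht.2.le⟩)
  have h01 : u 0 < u 1 := hmono (by norm_num) (by norm_num) one_pos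
  have heq : u 0 = u 1 := by
    simp [hu, hγ, hfzw]
  linarith

/-- Auxiliary version of the main theorem with derivative of positive real part. -/
lemma biholo_on_box_aux (a b : ℝ) (hab : a < b)
    (U : Set ℂ) (hU : IsOpen U)
    (g : ℂ → ℂ) (hg : DifferentiableOn ℂ g U)
    (hKU : (fun t : ℝ => (t : ℂ)) '' Set.Icc a b ⊆ U)
    (hpos : ∀ t ∈ Set.Icc a b, 0 < (deriv g (t : ℂ)).re) :
    ∃ η > 0, ∃ ε > 0,
      boxNbhd a b (2 * η) (2 * ε) ⊆ U ∧
      Set.InjOn g (boxNbhd a b (2 * η) (2 * ε)) ∧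
      ∀ z ∈ boxNbhd a b (2 * η) (2 * ε), 0 < (deriv g z).re := by
  set K : Set ℂ := (fun t : ℝ => (t : ℂ)) '' Set.Icc a b with hK
  have hKc : IsCompact K := isCompact_Icc.image Complex.continuous_ofReal
  have hderc : ContinuousOn (fun z => (deriv g z).re) U :=
    Complex.continuous_re.comp_continuousOn ((hg.analyticOnNhd hU).deriv.continuousOn)
  set V : Set ℂ := U ∩ (fun z => (deriv g z).re) ⁻¹' Set.Ioi 0 with hV
  have hVo : IsOpen V := hderc.isOpen_inter_preimage hU isOpen_Ioi
  have hKV : K ⊆ V := by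
    rintro z ⟨t, ht, rfl⟩
    exact ⟨hKU ⟨t, ht, rfl⟩, hpos t ht⟩
  obtain ⟨δ, hδ, hth⟩ := hKc.exists_thickening_subset_open hVo hKV
  refine ⟨δ / 5, by linarith, δ / 5, by linarith, ?_⟩
  have hbox : boxNbhd a b (2 * (δ / 5)) (2 * (δ / 5)) ⊆ V := by
    intro z hz
    obtain ⟨h1, h2, h3⟩ := hz
    apply hth
    rw [Metric.mem_thickening_iff]
    set t : ℝ := max a (min b z.re) with htdef
    have ht : t ∈ Set.Icc a b := ⟨le_max_left _ _,
      max_le hab.le (min_le_left _ _)⟩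
    refine ⟨(t : ℂ), ⟨t, ht, rfl⟩, ?_⟩
    have hre : |z.re - t| < 2 * (δ / 5) := by
      rcases lt_or_ge z.re a with h | h
      · have : t = a := by
          rw [htdef, min_eq_right (by linarith : z.re ≤ b), max_eq_left h.le]
        rw [this, abs_lt]; constructor <;> linarith
      · rcases le_or_gt z.re b with h' | h'
        · have : t = z.re := by
            rw [htdef, min_eq_right h', max_eq_right h]
          rw [this, sub_self, abs_zero]; linarith
        · have : t = b := by
            rw [htdef, min_eq_left h'.le, max_eq_right hab.le]
          rw [this, abs_lt]; constructor <;> linarith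
    calc dist z (t : ℂ) = ‖z - t‖ := Complex.dist_eq z t
      _ ≤ |(z - (t:ℂ)).re| + |(z - (t:ℂ)).im| := Complex.norm_le_abs_re_add_abs_im _
      _ = |z.re - t| + |z.im| := by simp
      _ < δ := by linarith
  have hboxU : boxNbhd a b (2 * (δ / 5)) (2 * (δ / 5)) ⊆ U := fun z hz => (hbox hz).1
  have hboxpos : ∀ z ∈ boxNbhd a b (2 * (δ / 5)) (2 * (δ / 5)), 0 < (deriv g z).re :=
    fun z hz => (hbox hz).2
  exact ⟨hboxU,
    injOn_of_re_deriv_pos (convex_boxNbhd _ _ _ _) (isOpen_boxNbhd _ _ _ _)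
      (hg.mono hboxU) hboxpos, hboxpos⟩

/-- Let `(f_L)` be holomorphic functions on a compact set `X` containing the segment
`[a,b]` in its interior, converging uniformly on `X` to `f`, with `f` real on `[a,b]`
and `f'` nonvanishing of constant sign there. Then there exist `η, ε > 0` such that
`f` is a biholomorphism from `S_{2η,2ε}([a,b])` onto its image (it is injective and
holomorphic with nonvanishing derivative there). -/
theorem biholo_on_box (a b : ℝ) (hab : a < b)
    (X : Set ℂ) (hX : IsCompact X)
    (hIX : (fun t : ℝ => (t : ℂ)) '' Set.Icc a b ⊆ interior X)
    (U : Set ℂ) (hU : IsOpen U) (hXU : X ⊆ U)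
    (f : ℂ → ℂ) (fL : ℕ → ℂ → ℂ)
    (hf : DifferentiableOn ℂ f U) (hfL : ∀ n, DifferentiableOn ℂ (fL n) U)
    (hconv : TendstoUniformlyOn fL f Filter.atTop X)
    (hreal : ∀ t ∈ Set.Icc a b, (f (t : ℂ)).im = 0)
    (hderiv :
      (∀ t ∈ Set.Icc a b, 0 < (deriv f (t : ℂ)).re ∧ (deriv f (t : ℂ)).im = 0) ∨
      (∀ t ∈ Set.Icc a b, (deriv f (t : ℂ)).re < 0 ∧ (deriv f (t : ℂ)).im = 0)) :
    ∃ η > 0, ∃ ε > 0,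
      boxNbhd a b (2 * η) (2 * ε) ⊆ U ∧
      Set.InjOn f (boxNbhd a b (2 * η) (2 * ε)) ∧
      ∀ z ∈ boxNbhd a b (2 * η) (2 * ε), deriv f z ≠ 0 := by
  have hKU : (fun t : ℝ => (t : ℂ)) '' Set.Icc a b ⊆ U :=
    fun z hz => hXU (interior_subset (hIX hz))
  rcases hderiv with hpos | hneg
  · obtain ⟨η, hη, ε, hε, hsub, hinj, hd⟩ :=
      biholo_on_box_aux a b hab U hU f hf hKU (fun t ht => (hpos t ht).1)
    refine ⟨η, hη, ε, hε, hsub, hinj, fun z hz h0 => ?_⟩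
    have := hd z hz
    rw [h0] at this
    simp at this
  · have hgneg : ∀ t ∈ Set.Icc a b, 0 < (deriv (fun z => -f z) (t : ℂ)).re := by
      intro t ht
      rw [deriv.fun_neg]
      simpa using (hneg t ht).1
    obtain ⟨η, hη, ε, hε, hsub, hinj, hd⟩ :=
      biholo_on_box_aux a b hab U hU (fun z => -f z) hf.neg hKU hgneg
    refine ⟨η, hη, ε, hε, hsub, fun z hz w hw h => hinj hz hw (by show -f z = -f w; rw [h]),
      fun z hz h0 => ?_⟩
    have := hd z hz
    rw [deriv.fun_neg, h0] at this
    simp at this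
end
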